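/- Let C ≠ 0, q and α be real. (1) If ψ is a finite linear combination of {e_{n,m} : n ≥ 1, m ≥ 1}, then H_{S¹}ψ = (1/(2C))(−2i ∂/∂θ₁ + q)²ψ − 2α cos(θ₁−θ₂)·ψ. (2) If ψ is a finite linear combination of {e_{n,m} : n ≤ −2, m ≤ −2}, then H_{S¹}ψ = (1/(2C))(−2i ∂/∂θ₁ + 1 + q)²ψ − 2α cos(θ₁−θ₂)·ψ. (3) If ψ is a finite linear combination of {e_{n,m} : n ≤ −1, m ≥ 1}, then H_{S¹}ψ = (1/(2C))(−2i ∂/∂θ₁ + q)²ψ − 2α cos(θ₁+θ₂)·ψ. (4) If ψ is a finite linear combination of {e_{n,m} : n ≥ 1, m ≤ −2}, then H_{S¹}ψ = (1/(2C))(−2i ∂/∂θ₁ + 1 + q)²ψ − 2α cos(θ₁+θ₂)·ψ. -/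

import Mathlib

noncomputable section

/-- Fourier coefficient model of `L²((ℝ/2πℤ)²)`: trigonometric polynomials and more
general elements are described by their coefficient families `c : ℤ×ℤ → ℂ`,
`c ↔ Σ c(n,m) e^{i(nθ₁+mθ₂)}`. -/
abbrev Coef := (ℤ × ℤ) → ℂ

/-- The projection `P¹_M` (restriction of the first Fourier index to `M`). -/
def proj1 (S : ℤ → Prop) [DecidablePred S] (c : Coef) : Coef := fun p =>
  if S p.1 then c p else 0

/-- The projection `P²_M` (restriction of the second Fourier index to `M`). -/
def proj2 (S : ℤ → Prop) [DecidablePred S] (c : Coef) : Coef := fun p =>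
  if S p.2 then c p else 0

/-- Multiplication by `e^{i(aθ₁+bθ₂)}`, i.e. the shift of Fourier coefficients. -/
def Emul (a b : ℤ) (c : Coef) : Coef := fun p => c (p.1 - a, p.2 - b)

/-- `A₀ = E_{1,1}P¹_{(−∞,−1]} + E_{−1,1}P¹_{[1,∞)}`. -/
def opA0 (c : Coef) : Coef :=
  Emul 1 1 (proj1 (fun n => n ≤ -1) c) + Emul (-1) 1 (proj1 (fun n => 1 ≤ n) c)

/-- `A₊ = E_{−1,−1}P¹_{(−∞,0]} + E_{−1,1}P¹_{[1,∞)} + E_{1,1}P¹_{(−∞,−1]} + E_{1,−1}P¹_{[0,∞)}`. -/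
def opAplus (c : Coef) : Coef :=
  Emul (-1) (-1) (proj1 (fun n => n ≤ 0) c) + Emul (-1) 1 (proj1 (fun n => 1 ≤ n) c)
    + Emul 1 1 (proj1 (fun n => n ≤ -1) c) + Emul 1 (-1) (proj1 (fun n => 0 ≤ n) c)

/-- `A₋₁ = E_{1,−1}P¹_{(−∞,−2]} + E_{1,0}P¹_{{−1}} + E_{−1,0}P¹_{{0}} + E_{−1,−1}P¹_{[1,∞)}`. -/
def opAm1 (c : Coef) : Coef :=
  Emul 1 (-1) (proj1 (fun n => n ≤ -2) c) + Emul 1 0 (proj1 (fun n => n = -1) c)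
    + Emul (-1) 0 (proj1 (fun n => n = 0) c) + Emul (-1) (-1) (proj1 (fun n => 1 ≤ n) c)

/-- `A₋ = E_{−1,1}P¹_{(−∞,−1]} + E_{−1,0}P¹_{{0}} + E_{−1,−1}P¹_{[1,∞)}
       + E_{1,−1}P¹_{(−∞,−2]} + E_{1,0}P¹_{{−1}} + E_{1,1}P¹_{[0,∞)}`. -/
def opAminus (c : Coef) : Coef :=
  Emul (-1) 1 (proj1 (fun n => n ≤ -1) c) + Emul (-1) 0 (proj1 (fun n => n = 0) c)
    + Emul (-1) (-1) (proj1 (fun n => 1 ≤ n) c) + Emul 1 (-1) (proj1 (fun n => n ≤ -2) c)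
    + Emul 1 0 (proj1 (fun n => n = -1) c) + Emul 1 1 (proj1 (fun n => 0 ≤ n) c)

/-- The tunneling operator
`H_{S¹,T} = A₀ P²_{{0}} + A₊ P²_{[1,∞)} + A₋₁ P²_{{−1}} + A₋ P²_{(−∞,−2]}`. -/
def tunnelS1 (c : Coef) : Coef :=
  opA0 (proj2 (fun m => m = 0) c) + opAplus (proj2 (fun m => 1 ≤ m) c)
    + opAm1 (proj2 (fun m => m = -1) c) + opAminus (proj2 (fun m => m ≤ -2) c)

/-- Fourier coefficient of the single exponential `e_{n,m}(θ₁,θ₂) = e^{i(nθ₁+mθ₂)}`. -/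
def cdelta (n m : ℤ) : Coef := fun p => if p = (n, m) then 1 else 0

/-- The trigonometric polynomial with coefficients `c`, as a function of `(θ₁, θ₂)`. -/
def realize (c : Coef) (θ₁ θ₂ : ℝ) : ℂ :=
  ∑ᶠ p : ℤ × ℤ, c p * Complex.exp (Complex.I * ((p.1 : ℂ) * (θ₁ : ℂ) + (p.2 : ℂ) * (θ₂ : ℂ)))

/-- The kinetic part: `e_{n,m} ↦ (1/(2C))(2n+q)² e_{n,m}` if `m ≥ 0`,
`e_{n,m} ↦ (1/(2C))(2n+1+q)² e_{n,m}` if `m ≤ −1`. -/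
def kinS1 (C q : ℝ) (c : Coef) : Coef := fun p =>
  if 0 ≤ p.2 then ((1 / (2 * C) * (2 * (p.1 : ℝ) + q) ^ 2 : ℝ) : ℂ) * c p
  else ((1 / (2 * C) * (2 * (p.1 : ℝ) + 1 + q) ^ 2 : ℝ) : ℂ) * c p

/-- The Josephson junction Hamiltonian
`H_{S¹} = (1/(2C))(−2i∂_{θ₁}+q)² P²_{[0,∞)} + (1/(2C))(−2i∂_{θ₁}+1+q)² P²_{(−∞,−1]} − α H_{S¹,T}`. -/
def hamS1 (C q α : ℝ) (c : Coef) : Coef := kinS1 C q c - (α : ℂ) • tunnelS1 c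

/-- The first-order differential operator `−2i d/dθ + q`. -/
def Dop (q : ℝ) (g : ℝ → ℂ) : ℝ → ℂ := fun t =>
  (-2) * Complex.I * deriv g t + (q : ℂ) * g t

/-! On a trigonometric polynomial supported in one of the four corner regions every projection
`P¹_M`, `P²_M` occurring in `H_{S¹,T}` acts as the identity or as zero. Hence `H_{S¹,T}` reduces to
`E_{-a,-b} + E_{a,b}`, which is multiplication by `2 cos (aθ₁ + bθ₂)`, and the kinetic part to the
single Fourier multiplier `(1/(2C)) (2n + q')²`, the symbol of `(1/(2C)) (−2i ∂_{θ₁} + q')²`. -/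

section

open Function Complex

def fourierMode (p : ℤ × ℤ) (θ₁ θ₂ : ℝ) : ℂ :=
  exp (I * ((p.1 : ℂ) * θ₁ + (p.2 : ℂ) * θ₂))

lemma fourierMode_add (p v : ℤ × ℤ) (θ₁ θ₂ : ℝ) :
    fourierMode (p + v) θ₁ θ₂ = fourierMode v θ₁ θ₂ * fourierMode p θ₁ θ₂ := by
  simp only [fourierMode, ← exp_add, Prod.fst_add, Prod.snd_add]
  push_cast
  ring_nf

lemma fourierMode_neg_add_fourierMode (v : ℤ × ℤ) (θ₁ θ₂ : ℝ) :
    fourierMode (-v) θ₁ θ₂ + fourierMode v θ₁ θ₂ = 2 * cos (v.1 * θ₁ + v.2 * θ₂) := by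
  simp only [two_cos, fourierMode, Prod.fst_neg, Prod.snd_neg]
  push_cast
  ring_nf

lemma hasDerivAt_fourierMode_fst (p : ℤ × ℤ) (θ₁ θ₂ : ℝ) :
    HasDerivAt (fun t => fourierMode p t θ₂) (I * p.1 * fourierMode p θ₁ θ₂) θ₁ := by
  have h : HasDerivAt (fun t : ℝ => I * ((p.1 : ℂ) * t + (p.2 : ℂ) * θ₂)) (I * p.1) θ₁ := by
    simpa using (((hasDerivAt_id θ₁).ofReal_comp.const_mul (p.1 : ℂ)).add_const
      ((p.2 : ℂ) * θ₂)).const_mul I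
  simpa [fourierMode, mul_comm] using h.cexp

lemma realize_eq_finsum (c : Coef) (θ₁ θ₂ : ℝ) :
    realize c θ₁ θ₂ = ∑ᶠ p, c p * fourierMode p θ₁ θ₂ := rfl

lemma realize_eq_sum {c : Coef} {s : Finset (ℤ × ℤ)} (h : support c ⊆ s) (θ₁ θ₂ : ℝ) :
    realize c θ₁ θ₂ = ∑ p ∈ s, c p * fourierMode p θ₁ θ₂ :=
  finsum_eq_finsetSum_of_support_subset _ ((support_mul_subset_left _ _).trans h)

lemma realize_sub {c d : Coef} (hc : (support c).Finite) (hd : (support d).Finite)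
    (θ₁ θ₂ : ℝ) : realize (c - d) θ₁ θ₂ = realize c θ₁ θ₂ - realize d θ₁ θ₂ := by
  simp only [realize_eq_finsum, Pi.sub_apply, sub_mul]
  exact finsum_sub_distrib (hc.subset (support_mul_subset_left _ _))
    (hd.subset (support_mul_subset_left _ _))

lemma realize_add {c d : Coef} (hc : (support c).Finite) (hd : (support d).Finite)
    (θ₁ θ₂ : ℝ) : realize (c + d) θ₁ θ₂ = realize c θ₁ θ₂ + realize d θ₁ θ₂ := by
  simp only [realize_eq_finsum, Pi.add_apply, add_mul]
  exact finsum_add_distrib (hc.subset (support_mul_subset_left _ _))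
    (hd.subset (support_mul_subset_left _ _))

lemma realize_smul (z : ℂ) (c : Coef) (θ₁ θ₂ : ℝ) :
    realize (z • c) θ₁ θ₂ = z * realize c θ₁ θ₂ := by
  simp only [realize_eq_finsum, mul_finsum, Pi.smul_apply, smul_eq_mul, mul_assoc]

lemma realize_Emul (a b : ℤ) (c : Coef) (θ₁ θ₂ : ℝ) :
    realize (Emul a b c) θ₁ θ₂ = fourierMode (a, b) θ₁ θ₂ * realize c θ₁ θ₂ := by
  rw [realize_eq_finsum, ← finsum_comp_equiv (Equiv.addRight (a, b)), realize_eq_finsum,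
    mul_finsum]
  refine finsum_congr fun p => ?_
  simp only [Equiv.coe_addRight, Emul, fourierMode_add, Prod.fst_add, Prod.snd_add,
    add_sub_cancel_right]
  ring

lemma support_Emul_finite (a b : ℤ) {c : Coef} (hc : (support c).Finite) :
    (support (Emul a b c)).Finite :=
  hc.preimage fun _ _ _ _ h => Prod.ext_iff.2 (by simpa using h)

lemma Dop_realize (q' : ℝ) {c : Coef} (hc : (support c).Finite) (θ₂ : ℝ) :
    Dop q' (fun t => realize c t θ₂)
      = fun t => realize (fun p => (2 * (p.1 : ℂ) + q') * c p) t θ₂ := by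
  funext θ₁
  have hs : support c ⊆ hc.toFinset := by rw [Set.Finite.coe_toFinset]
  have hs' : support (fun p => (2 * (p.1 : ℂ) + q') * c p) ⊆ hc.toFinset :=
    (support_mul_subset_right _ _).trans hs
  have hderiv : HasDerivAt (fun t => realize c t θ₂)
      (∑ p ∈ hc.toFinset, c p * (I * p.1 * fourierMode p θ₁ θ₂)) θ₁ := by
    simp only [realize_eq_sum hs]
    exact HasDerivAt.fun_sum fun p _ => (hasDerivAt_fourierMode_fst p θ₁ θ₂).const_mul (c p)
  rw [Dop, hderiv.deriv, realize_eq_sum hs, realize_eq_sum hs', Finset.mul_sum, Finset.mul_sum,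
    ← Finset.sum_add_distrib]
  refine Finset.sum_congr rfl fun p _ => ?_
  linear_combination (-2 * (p.1 : ℂ) * c p * fourierMode p θ₁ θ₂) * I_mul_I

lemma realize_Emul_neg_add_Emul (a b : ℤ) {c : Coef} (hc : (support c).Finite) (θ₁ θ₂ : ℝ) :
    realize (Emul (-a) (-b) c + Emul a b c) θ₁ θ₂
      = 2 * cos (a * θ₁ + b * θ₂) * realize c θ₁ θ₂ := by
  rw [realize_add (support_Emul_finite _ _ hc) (support_Emul_finite _ _ hc), realize_Emul,
    realize_Emul, ← add_mul, ← Prod.neg_mk, fourierMode_neg_add_fourierMode]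

end

section

variable {S : ℤ → Prop} [DecidablePred S] {c : Coef}

lemma proj1_eq_self (h : ∀ p, c p ≠ 0 → S p.1) : proj1 S c = c :=
  funext fun p => ite_eq_left_iff.2 fun hS => (not_not.1 (mt (h p) hS)).symm

lemma proj1_eq_zero (h : ∀ p, c p ≠ 0 → ¬ S p.1) : proj1 S c = 0 :=
  funext fun p => ite_eq_right_iff.2 fun hS => not_not.1 (mt (h p) (not_not.2 hS))

lemma proj2_eq_self (h : ∀ p, c p ≠ 0 → S p.2) : proj2 S c = c :=
  funext fun p => ite_eq_left_iff.2 fun hS => (not_not.1 (mt (h p) hS)).symm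

lemma proj2_eq_zero (h : ∀ p, c p ≠ 0 → ¬ S p.2) : proj2 S c = 0 :=
  funext fun p => ite_eq_right_iff.2 fun hS => not_not.1 (mt (h p) (not_not.2 hS))

@[simp] lemma proj1_zero : proj1 S (0 : Coef) = 0 :=
  funext fun _ => ite_self 0

end

@[simp] lemma Emul_zero (a b : ℤ) : Emul a b (0 : Coef) = 0 := rfl

section

open Function Complex

variable {ψ : Coef}

lemma tunnelS1_eq_opAplus (h : ∀ p, ψ p ≠ 0 → 1 ≤ p.2) : tunnelS1 ψ = opAplus ψ := by
  simp (disch := intro p hp; have := h p hp; omega) only [tunnelS1, proj2_eq_self, proj2_eq_zero]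
  simp only [opA0, opAm1, opAminus, proj1_zero, Emul_zero, add_zero, zero_add]

lemma tunnelS1_eq_opAminus (h : ∀ p, ψ p ≠ 0 → p.2 ≤ -2) : tunnelS1 ψ = opAminus ψ := by
  simp (disch := intro p hp; have := h p hp; omega) only [tunnelS1, proj2_eq_self, proj2_eq_zero]
  simp only [opA0, opAplus, opAm1, proj1_zero, Emul_zero, add_zero, zero_add]

lemma opAplus_eq_of_pos (h : ∀ p, ψ p ≠ 0 → 1 ≤ p.1) :
    opAplus ψ = Emul (-1) 1 ψ + Emul 1 (-1) ψ := by
  simp (disch := intro p hp; have := h p hp; omega) only [opAplus, proj1_eq_self, proj1_eq_zero,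
    Emul_zero, add_zero, zero_add]

lemma opAplus_eq_of_neg (h : ∀ p, ψ p ≠ 0 → p.1 ≤ -1) :
    opAplus ψ = Emul (-1) (-1) ψ + Emul 1 1 ψ := by
  simp (disch := intro p hp; have := h p hp; omega) only [opAplus, proj1_eq_self, proj1_eq_zero,
    Emul_zero, add_zero]

lemma opAminus_eq_of_le_neg_two (h : ∀ p, ψ p ≠ 0 → p.1 ≤ -2) :
    opAminus ψ = Emul (-1) 1 ψ + Emul 1 (-1) ψ := by
  simp (disch := intro p hp; have := h p hp; omega) only [opAminus, proj1_eq_self, proj1_eq_zero,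
    Emul_zero, add_zero]

lemma opAminus_eq_of_pos (h : ∀ p, ψ p ≠ 0 → 1 ≤ p.1) :
    opAminus ψ = Emul (-1) (-1) ψ + Emul 1 1 ψ := by
  simp (disch := intro p hp; have := h p hp; omega) only [opAminus, proj1_eq_self, proj1_eq_zero,
    Emul_zero, add_zero, zero_add]

lemma kinS1_eq_of_nonneg (C q : ℝ) (h : ∀ p, ψ p ≠ 0 → 0 ≤ p.2) :
    kinS1 C q ψ = ((1 / (2 * C) : ℝ) : ℂ) •
      fun p => (2 * (p.1 : ℂ) + q) * ((2 * p.1 + q) * ψ p) := by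
  funext p
  by_cases hp : ψ p = 0
  · simp [kinS1, hp]
  · simp only [kinS1, if_pos (h p hp), Pi.smul_apply, smul_eq_mul]
    push_cast
    ring

lemma kinS1_eq_of_neg (C q : ℝ) (h : ∀ p, ψ p ≠ 0 → p.2 < 0) :
    kinS1 C q ψ = ((1 / (2 * C) : ℝ) : ℂ) •
      fun p => (2 * (p.1 : ℂ) + (1 + q : ℝ)) * ((2 * p.1 + (1 + q : ℝ)) * ψ p) := by
  funext p
  by_cases hp : ψ p = 0
  · simp [kinS1, hp]
  · simp only [kinS1, if_neg (not_le.2 (h p hp)), Pi.smul_apply, smul_eq_mul]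
    push_cast
    ring

lemma realize_hamS1_of_kinS1_of_tunnelS1 {C q α q' : ℝ} (a b : ℤ) (hψ : (support ψ).Finite)
    (hkin : kinS1 C q ψ = ((1 / (2 * C) : ℝ) : ℂ) •
      fun p => (2 * (p.1 : ℂ) + q') * ((2 * p.1 + q') * ψ p))
    (htun : tunnelS1 ψ = Emul (-a) (-b) ψ + Emul a b ψ) (θ₁ θ₂ : ℝ) :
    realize (hamS1 C q α ψ) θ₁ θ₂
      = ((1 / (2 * C) : ℝ) : ℂ) * Dop q' (Dop q' (fun t => realize ψ t θ₂)) θ₁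
        - 2 * α * cos (a * θ₁ + b * θ₂) * realize ψ θ₁ θ₂ := by
  have hkin_fin : (support (kinS1 C q ψ)).Finite := by
    rw [hkin]
    exact hψ.subset <| (support_const_smul_subset _ _).trans <|
      (support_mul_subset_right _ _).trans (support_mul_subset_right _ _)
  have htun_fin : (support ((α : ℂ) • tunnelS1 ψ)).Finite := by
    rw [htun]
    exact ((support_Emul_finite _ _ hψ).union (support_Emul_finite _ _ hψ)).subset
      ((support_const_smul_subset _ _).trans (support_add _ _))
  rw [hamS1, realize_sub hkin_fin htun_fin, hkin, realize_smul, realize_smul, htun,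
    realize_Emul_neg_add_Emul a b hψ, Dop_realize q' hψ,
    Dop_realize q' (hψ.subset (support_mul_subset_right _ _))]
  ring

end

theorem stmt14_general (C q α : ℝ) (ψ : Coef)
    (hfin : (Function.support ψ).Finite) :
    ((∀ p : ℤ × ℤ, ψ p ≠ 0 → 1 ≤ p.1 ∧ 1 ≤ p.2) → ∀ θ₁ θ₂ : ℝ,
      realize (hamS1 C q α ψ) θ₁ θ₂
        = ((1 / (2 * C) : ℝ) : ℂ) * Dop q (Dop q (fun t => realize ψ t θ₂)) θ₁
          - 2 * (α : ℂ) * Complex.cos ((θ₁ : ℂ) - (θ₂ : ℂ)) * realize ψ θ₁ θ₂) ∧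
    ((∀ p : ℤ × ℤ, ψ p ≠ 0 → p.1 ≤ -2 ∧ p.2 ≤ -2) → ∀ θ₁ θ₂ : ℝ,
      realize (hamS1 C q α ψ) θ₁ θ₂
        = ((1 / (2 * C) : ℝ) : ℂ) * Dop (1 + q) (Dop (1 + q) (fun t => realize ψ t θ₂)) θ₁
          - 2 * (α : ℂ) * Complex.cos ((θ₁ : ℂ) - (θ₂ : ℂ)) * realize ψ θ₁ θ₂) ∧
    ((∀ p : ℤ × ℤ, ψ p ≠ 0 → p.1 ≤ -1 ∧ 1 ≤ p.2) → ∀ θ₁ θ₂ : ℝ,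
      realize (hamS1 C q α ψ) θ₁ θ₂
        = ((1 / (2 * C) : ℝ) : ℂ) * Dop q (Dop q (fun t => realize ψ t θ₂)) θ₁
          - 2 * (α : ℂ) * Complex.cos ((θ₁ : ℂ) + (θ₂ : ℂ)) * realize ψ θ₁ θ₂) ∧
    ((∀ p : ℤ × ℤ, ψ p ≠ 0 → 1 ≤ p.1 ∧ p.2 ≤ -2) → ∀ θ₁ θ₂ : ℝ,
      realize (hamS1 C q α ψ) θ₁ θ₂
        = ((1 / (2 * C) : ℝ) : ℂ) * Dop (1 + q) (Dop (1 + q) (fun t => realize ψ t θ₂)) θ₁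
          - 2 * (α : ℂ) * Complex.cos ((θ₁ : ℂ) + (θ₂ : ℂ)) * realize ψ θ₁ θ₂) := by
  have hsub (θ₁ θ₂ : ℝ) : (θ₁ : ℂ) - θ₂ = ((1 : ℤ) : ℂ) * θ₁ + ((-1 : ℤ) : ℂ) * θ₂ := by
    push_cast; ring
  have hadd (θ₁ θ₂ : ℝ) : (θ₁ : ℂ) + θ₂ = ((1 : ℤ) : ℂ) * θ₁ + ((1 : ℤ) : ℂ) * θ₂ := by
    push_cast; ring
  refine ⟨fun h θ₁ θ₂ => ?_, fun h θ₁ θ₂ => ?_, fun h θ₁ θ₂ => ?_, fun h θ₁ θ₂ => ?_⟩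
  · rw [hsub]
    refine realize_hamS1_of_kinS1_of_tunnelS1 1 (-1) hfin
      (kinS1_eq_of_nonneg C q fun p hp => by have := h p hp; omega) ?_ θ₁ θ₂
    rw [neg_neg, tunnelS1_eq_opAplus fun p hp => (h p hp).2,
      opAplus_eq_of_pos fun p hp => (h p hp).1]
  · rw [hsub]
    refine realize_hamS1_of_kinS1_of_tunnelS1 1 (-1) hfin
      (kinS1_eq_of_neg C q fun p hp => by have := h p hp; omega) ?_ θ₁ θ₂
    rw [neg_neg, tunnelS1_eq_opAminus fun p hp => (h p hp).2,
      opAminus_eq_of_le_neg_two fun p hp => (h p hp).1]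
  · rw [hadd]
    refine realize_hamS1_of_kinS1_of_tunnelS1 1 1 hfin
      (kinS1_eq_of_nonneg C q fun p hp => by have := h p hp; omega) ?_ θ₁ θ₂
    rw [tunnelS1_eq_opAplus fun p hp => (h p hp).2, opAplus_eq_of_neg fun p hp => (h p hp).1]
  · rw [hadd]
    refine realize_hamS1_of_kinS1_of_tunnelS1 1 1 hfin
      (kinS1_eq_of_neg C q fun p hp => by have := h p hp; omega) ?_ θ₁ θ₂
    rw [tunnelS1_eq_opAminus fun p hp => (h p hp).2, opAminus_eq_of_pos fun p hp => (h p hp).1]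

/-- the action of `H_{S¹}` on finite linear combinations of the
`e_{n,m}` drawn from each of the four corner regions. -/
theorem stmt14 (C q α : ℝ) (hC : C ≠ 0) (ψ : Coef)
    (hfin : (Function.support ψ).Finite) :
    ((∀ p : ℤ × ℤ, ψ p ≠ 0 → 1 ≤ p.1 ∧ 1 ≤ p.2) → ∀ θ₁ θ₂ : ℝ,
      realize (hamS1 C q α ψ) θ₁ θ₂
        = ((1 / (2 * C) : ℝ) : ℂ) * Dop q (Dop q (fun t => realize ψ t θ₂)) θ₁
          - 2 * (α : ℂ) * Complex.cos ((θ₁ : ℂ) - (θ₂ : ℂ)) * realize ψ θ₁ θ₂) ∧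
    ((∀ p : ℤ × ℤ, ψ p ≠ 0 → p.1 ≤ -2 ∧ p.2 ≤ -2) → ∀ θ₁ θ₂ : ℝ,
      realize (hamS1 C q α ψ) θ₁ θ₂
        = ((1 / (2 * C) : ℝ) : ℂ) * Dop (1 + q) (Dop (1 + q) (fun t => realize ψ t θ₂)) θ₁
          - 2 * (α : ℂ) * Complex.cos ((θ₁ : ℂ) - (θ₂ : ℂ)) * realize ψ θ₁ θ₂) ∧
    ((∀ p : ℤ × ℤ, ψ p ≠ 0 → p.1 ≤ -1 ∧ 1 ≤ p.2) → ∀ θ₁ θ₂ : ℝ,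
      realize (hamS1 C q α ψ) θ₁ θ₂
        = ((1 / (2 * C) : ℝ) : ℂ) * Dop q (Dop q (fun t => realize ψ t θ₂)) θ₁
          - 2 * (α : ℂ) * Complex.cos ((θ₁ : ℂ) + (θ₂ : ℂ)) * realize ψ θ₁ θ₂) ∧
    ((∀ p : ℤ × ℤ, ψ p ≠ 0 → 1 ≤ p.1 ∧ p.2 ≤ -2) → ∀ θ₁ θ₂ : ℝ,
      realize (hamS1 C q α ψ) θ₁ θ₂
        = ((1 / (2 * C) : ℝ) : ℂ) * Dop (1 + q) (Dop (1 + q) (fun t => realize ψ t θ₂)) θ₁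
          - 2 * (α : ℂ) * Complex.cos ((θ₁ : ℂ) + (θ₂ : ℂ)) * realize ψ θ₁ θ₂) :=
  stmt14_general C q α ψ hfin
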